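/- arXiv:1512.02442 — 5 statements merged into one kernel-verified Lean document; each statement's English description precedes it below -/
import Mathlib

section
/- Let F : mod(B) → mod(A) be a weakly homological embedding between module categories of finite dimensional algebras whose essential image Im(F) is closed under subobjects in mod(A). Then Im(F) is closed under quotients in mod(A). -/
/-! Write a quotient `N` of `F X` as `F X / L`, where `L` is
finitely generated because `A` is noetherian. Closure under subobjects gives `L ≅ F Y`, and
fullness lifts the inclusion `F Y ↪ F X` to `f : Y ⟶ X`. Faithful functors reflect monomorphisms,
and monomorphisms of `mod B` are injective (test against `B` itself), so `f` is injective; exactness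
of `F` on `0 → Y → X → X / Y → 0` then identifies `F (X / Y)` with `F X / L ≅ N`. -/

open CategoryTheory Limits Opposite

universe u

noncomputable section

variable (K : Type u) [Field K]

/-- The `n`-th Ext group of two `A`-modules, as a `K`-vector space, computed in the
category of all `A`-modules (for finite dimensional modules this agrees with the
Ext groups computed in the category of finite dimensional modules). -/
abbrev ExtGrp (A : Type u) [Ring A] [Algebra K A] (n : ℕ) (X Y : ModuleCat.{u} A) :
    ModuleCat.{u} K :=
  ((Ext K (ModuleCat.{u} A) n).obj (op X)).obj Y

/-- The category `mod A` of finite dimensional `A`-modules: since `A` is a finite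
dimensional `K`-algebra, these are exactly the finitely generated `A`-modules. -/
abbrev fdMod (A : Type u) [Ring A] [Algebra K A] :=
  ObjectProperty.FullSubcategory (fun M : ModuleCat.{u} A => Module.Finite A M)

variable {K} in
/-- A morphism in `fdMod K A`, viewed as a morphism of the underlying modules. -/
abbrev fdHom {A : Type u} [Ring A] [Algebra K A] {X Y : fdMod K A} (f : X ⟶ Y) :
    X.obj ⟶ Y.obj := f.hom

variable {K} in
/-- A functor between categories of finite dimensional modules is exact if it preserves
short exact sequences. -/
def IsExactFunctor {A B : Type u} [Ring A] [Algebra K A] [Ring B] [Algebra K B]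
    (F : fdMod K A ⥤ fdMod K B) : Prop :=
  ∀ (X Y Z : fdMod K A) (f : X ⟶ Y) (g : Y ⟶ Z),
    Function.Injective (fdHom f) → Function.Exact (fdHom f) (fdHom g) →
      Function.Surjective (fdHom g) →
      Function.Injective (fdHom (F.map f)) ∧
        Function.Exact (fdHom (F.map f)) (fdHom (F.map g)) ∧
          Function.Surjective (fdHom (F.map g))

namespace fdMod

variable {K} {C : Type u} [Ring C] [Algebra K C]

abbrev of (M : Type u) [AddCommGroup M] [Module C M] [Module.Finite C M] : fdMod K C :=
  ⟨ModuleCat.of C M, ‹_›⟩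

theorem bijective_of_iso {X Y : fdMod K C} (e : X ≅ Y) : Function.Bijective (fdHom e.hom) :=
  ConcreteCategory.bijective_of_isIso ((ObjectProperty.ι _).map e.hom)

theorem mono_of_injective {X Y : fdMod K C} (f : X ⟶ Y) (hf : Function.Injective (fdHom f)) :
    Mono f :=
  have : Mono ((ObjectProperty.ι _).map f) := (ModuleCat.mono_iff_injective _).mpr hf
  (ObjectProperty.ι _).mono_of_mono_map this

theorem injective_of_mono {X Y : fdMod K C} (f : X ⟶ Y) [Mono f] :
    Function.Injective (fdHom f) := by
  rw [← LinearMap.ker_eq_bot, Submodule.eq_bot_iff]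
  intro y hy
  let t : of (K := K) C ⟶ X :=
    ObjectProperty.homMk (ModuleCat.ofHom (LinearMap.toSpanSingleton C X.obj y))
  let z : of (K := K) C ⟶ X := ObjectProperty.homMk 0
  have htz : t = z := (cancel_mono f).mp <| by
    ext
    simpa [t, z] using hy
  simpa [t, z] using congr_arg (fun m => fdHom m (1 : C)) htz

theorem injective_of_injective_map {D : Type u} [Ring D] [Algebra K D]
    (F : fdMod K C ⥤ fdMod K D) [F.Faithful] {X Y : fdMod K C} (f : X ⟶ Y)
    (hf : Function.Injective (fdHom (F.map f))) : Function.Injective (fdHom f) :=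
  have := F.mono_of_mono_map (mono_of_injective _ hf)
  injective_of_mono f

end fdMod

variable {K} in
theorem IsExactFunctor.essImage_of_exact {A B : Type u} [Ring A] [Algebra K A]
    [Ring B] [Algebra K B] {F : fdMod K B ⥤ fdMod K A} [F.Full] [F.Faithful]
    (hF : IsExactFunctor F) {X Y : fdMod K B} {N : fdMod K A} (u : F.obj Y ⟶ F.obj X)
    (q : (F.obj X).obj ⟶ N.obj) (hu : Function.Injective (fdHom u))
    (huq : Function.Exact (fdHom u) q) (hq : Function.Surjective q) :
    F.essImage N := by
  let f := F.preimage u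
  have hf : Function.Injective (fdHom f) :=
    fdMod.injective_of_injective_map F f (by simpa [f] using hu)
  have := X.property
  let g : X ⟶ fdMod.of (X.obj ⧸ LinearMap.range (fdHom f).hom) :=
    ObjectProperty.homMk (ModuleCat.ofHom (LinearMap.range _).mkQ)
  obtain ⟨-, hfg, hg⟩ :=
    hF _ _ _ f g hf (LinearMap.exact_map_mkQ_range _) (Submodule.mkQ_surjective _)
  rw [F.map_preimage] at hfg
  exact ⟨_, ⟨ObjectProperty.isoMk _ (LinearEquiv.toModuleIso
    ((hfg.linearEquivOfSurjective hg).symm ≪≫ₗ huq.linearEquivOfSurjective hq))⟩⟩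

theorem essImage_closed_subobjects_imp_closed_quotients
    (A B : Type u) [Ring A] [Algebra K A] [FiniteDimensional K A]
    [Ring B] [Algebra K B]
    (F : fdMod K B ⥤ fdMod K A) (hfull : F.Full) (hfaithful : F.Faithful)
    (hexact : IsExactFunctor F)
    (hsub : ∀ (M N : fdMod K A), F.essImage M →
      (∃ i : N.obj ⟶ M.obj, Function.Injective i) → F.essImage N) :
    ∀ (M N : fdMod K A), F.essImage M →
      (∃ p : M.obj ⟶ N.obj, Function.Surjective p) → F.essImage N := by
  have : IsNoetherianRing A := isNoetherian_of_tower K inferInstance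
  rintro M N ⟨X, ⟨e⟩⟩ ⟨p, hp⟩
  let q := fdHom e.hom ≫ p
  have hq : Function.Surjective q := hp.comp (fdMod.bijective_of_iso e).2
  have := (F.obj X).property
  let i : fdMod.of (LinearMap.ker q.hom) ⟶ F.obj X :=
    ObjectProperty.homMk (ModuleCat.ofHom (LinearMap.ker q.hom).subtype)
  obtain ⟨Y, ⟨e'⟩⟩ := hsub _ _ ⟨X, ⟨Iso.refl _⟩⟩ ⟨fdHom i, Submodule.injective_subtype _⟩
  have hbij := fdMod.bijective_of_iso e'
  refine hexact.essImage_of_exact (e'.hom ≫ i) q ?_ ?_ hq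
  · exact (Submodule.injective_subtype _).comp hbij.1
  · exact hbij.2.comp_exact_iff_exact.mpr (LinearMap.exact_subtype_ker_map _)
end
end

section
/- Let A and B be finite dimensional self-injective algebras such that the stable module categories mod-bar(B) and mod-bar(A) are triangle equivalent. If A satisfies the Tachikawa conjecture, then so does B. -/
open CategoryTheory Limits Opposite

universe u

noncomputable section

variable (K : Type u) [Field K]

/-- The algebra `A` satisfies the Tachikawa conjecture: every finite dimensional
`A`-module with no self-extensions is projective. -/
def SatisfiesTachikawa (A : Type u) [Ring A] [Algebra K A] : Prop :=
  ∀ (M : ModuleCat.{u} A), Module.Finite A M →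
    (∀ i : ℕ, 0 < i → Subsingleton (ExtGrp K A i M M)) → Module.Projective A M

/-- `N` is a (first) syzygy of `M`: there is a projective cover `p : P → M`
(an epimorphism from a projective with superfluous kernel) with kernel `N`. -/
def IsSyzygyOf (A : Type u) [Ring A] (N M : ModuleCat.{u} A) : Prop :=
  ∃ (P : ModuleCat.{u} A) (p : P ⟶ M) (i : N ⟶ P),
    Module.Projective A P ∧ Function.Surjective p ∧
    (∀ L : Submodule A P, (∀ x : P, ∃ y ∈ L, p y = p x) → L = ⊤) ∧
    Function.Injective i ∧ Function.Exact i p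

/-- `HasSyzygyChain A M N d` says that `N ≅ Ω^d(M)`: there is a chain of `d`
successive syzygies starting at `M` and ending at a module isomorphic to `N`. -/
def HasSyzygyChain (A : Type u) [Ring A] (M N : ModuleCat.{u} A) (d : ℕ) : Prop :=
  ∃ C : ℕ → ModuleCat.{u} A, C 0 = M ∧ (∀ i < d, IsSyzygyOf A (C (i + 1)) (C i)) ∧
    Nonempty (C d ≅ N)

/-- The stable relation on `mod A`: two morphisms are identified if their difference
factors through a projective module. -/
def stableRel (A : Type u) [Ring A] [Algebra K A] : HomRel (fdMod K A) :=
  fun {X Y} f g =>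
    ∃ (P : ModuleCat.{u} A) (_ : Module.Projective A P)
      (u : X.obj ⟶ P) (v : P ⟶ Y.obj), fdHom f - fdHom g = u ≫ v

/-- The stable module category `mod-bar A` of the finite dimensional algebra `A`:
the quotient of `mod A` by the ideal of morphisms factoring through projectives. -/
def StableMod (A : Type u) [Ring A] [Algebra K A] :=
  CategoryTheory.Quotient (stableRel K A)

instance (A : Type u) [Ring A] [Algebra K A] : Category (StableMod K A) :=
  inferInstanceAs (Category (CategoryTheory.Quotient (stableRel K A)))

/-!
For a syzygy sequence `0 → Ω^(n+1) M → P n → Ω^n M → 0` (with `P n` projective), the group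
`Ext^(n+1)(M, Y)` vanishes iff every map `Ω^(n+1) M → Y` extends to `P n`. Such an extension
makes the map factor through a projective; conversely, over a self-injective algebra a map into a
finitely generated module that factors through a projective factors through some `R^m`, which is
injective, so it extends. Hence over a self-injective algebra `Ext^(n+1)(M, Y) = 0` iff the
stable `Hom(Ω^(n+1) M, Y)` vanishes.

If `M` is a `B`-module without self-extensions, all stable `Hom(Ω^(n+1) M, M)` vanish. The
equivalence `ψ` commutes with `Ω`, so all stable `Hom(Ω^(n+1) ψM, ψM)` vanish, i.e. `ψM` has no
self-extensions over the self-injective algebra `A`. By the Tachikawa conjecture for `A`, `ψM` is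
projective, i.e. zero in the stable category; hence so is `M`, i.e. `M` is projective.
-/

section StableCategory

variable {R : Type u} [Ring R]

def FactorsThroughProjective {X Y : ModuleCat.{u} R} (f : X ⟶ Y) : Prop :=
  ∃ (P : ModuleCat.{u} R) (_ : Module.Projective R P) (u : X ⟶ P) (v : P ⟶ Y), f = u ≫ v

namespace FactorsThroughProjective

variable {X Y Z : ModuleCat.{u} R}

lemma zero : FactorsThroughProjective (0 : X ⟶ Y) :=
  ⟨ModuleCat.of R R, inferInstance, 0, 0, by simp⟩

lemma of_projective_left [Module.Projective R X] (f : X ⟶ Y) : FactorsThroughProjective f :=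
  ⟨X, inferInstance, 𝟙 X, f, by simp⟩

lemma neg {f : X ⟶ Y} (hf : FactorsThroughProjective f) : FactorsThroughProjective (-f) := by
  obtain ⟨P, hP, u, v, rfl⟩ := hf
  exact ⟨P, hP, -u, v, by simp⟩

lemma add {f g : X ⟶ Y} (hf : FactorsThroughProjective f) (hg : FactorsThroughProjective g) :
    FactorsThroughProjective (f + g) := by
  obtain ⟨P, hP, u, v, rfl⟩ := hf
  obtain ⟨Q, hQ, u', v', rfl⟩ := hg
  refine ⟨ModuleCat.of R (P × Q), inferInstance, ModuleCat.ofHom (u.hom.prod u'.hom),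
    ModuleCat.ofHom (v.hom.coprod v'.hom), ?_⟩
  ext x
  simp

lemma comp_left {f : Y ⟶ Z} (hf : FactorsThroughProjective f) (g : X ⟶ Y) :
    FactorsThroughProjective (g ≫ f) := by
  obtain ⟨P, hP, u, v, rfl⟩ := hf
  exact ⟨P, hP, g ≫ u, v, by simp⟩

lemma comp_right {f : X ⟶ Y} (hf : FactorsThroughProjective f) (g : Y ⟶ Z) :
    FactorsThroughProjective (f ≫ g) := by
  obtain ⟨P, hP, u, v, rfl⟩ := hf
  exact ⟨P, hP, u, v ≫ g, by simp⟩

lemma exists_finite_free [Module.Finite R Y] {f : X ⟶ Y} (hf : FactorsThroughProjective f) :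
    ∃ (m : ℕ) (a : X →ₗ[R] Fin m → R) (b : (Fin m → R) →ₗ[R] Y), b ∘ₗ a = f.hom := by
  obtain ⟨P, _, u, v, rfl⟩ := hf
  obtain ⟨m, q, hq⟩ := Module.Finite.exists_fin' R Y
  obtain ⟨v', hv'⟩ := Module.projective_lifting_property q v.hom hq
  exact ⟨m, v' ∘ₗ u.hom, q, by rw [← LinearMap.comp_assoc, hv']; rfl⟩

lemma exists_comp_eq [Module.Injective R R] [Module.Finite R Y] {f : X ⟶ Y}
    (hf : FactorsThroughProjective f) {i : X ⟶ Z} (hi : Function.Injective i) :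
    ∃ g : Z ⟶ Y, i ≫ g = f := by
  obtain ⟨m, a, b, hab⟩ := hf.exists_finite_free
  obtain ⟨e, he⟩ := Module.Injective.extension_property R (Fin m → R) X Z i.hom hi a
  exact ⟨ModuleCat.ofHom (b ∘ₗ e), by ext x; simp [← hab, ← he]⟩

end FactorsThroughProjective

lemma projective_iff_factorsThroughProjective_id (X : ModuleCat.{u} R) :
    Module.Projective R X ↔ FactorsThroughProjective (𝟙 X) := by
  refine ⟨fun _ => .of_projective_left _, fun ⟨P, _, u, v, h⟩ => ?_⟩
  exact Module.Projective.of_split u.hom v.hom (congrArg ModuleCat.Hom.hom h.symm)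

variable [Algebra K R]

lemma stableRel_iff {X Y : fdMod K R} (f g : X ⟶ Y) :
    stableRel K R f g ↔ FactorsThroughProjective (fdHom f - fdHom g) :=
  Iff.rfl

instance : Congruence (stableRel K R) where
  equivalence :=
    { refl _ := by simpa [stableRel_iff] using FactorsThroughProjective.zero
      symm h := by simpa [stableRel_iff] using FactorsThroughProjective.neg h
      trans h₁ h₂ := by simpa [stableRel_iff] using FactorsThroughProjective.add h₁ h₂ }
  comp_left f _ _ h := by
    simpa [stableRel_iff, Preadditive.comp_sub] using
      FactorsThroughProjective.comp_left h (fdHom f)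
  comp_right g h := by
    simpa [stableRel_iff, Preadditive.sub_comp] using
      FactorsThroughProjective.comp_right h (fdHom g)

variable {K}

lemma StableMod.subsingleton_hom_iff {X Y : fdMod K R} :
    Subsingleton ((⟨X⟩ : StableMod K R) ⟶ ⟨Y⟩) ↔
      ∀ f : X.obj ⟶ Y.obj, FactorsThroughProjective f := by
  refine ⟨fun h f => ?_, fun h => ⟨fun a b => ?_⟩⟩
  · have := (Quotient.functor_map_eq_iff (stableRel K R) (ObjectProperty.homMk f) 0).1
      (Subsingleton.elim (α := (⟨X⟩ : StableMod K R) ⟶ ⟨Y⟩) _ _)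
    simpa [stableRel_iff] using this
  · obtain ⟨f, rfl⟩ := (Quotient.functor (stableRel K R)).map_surjective a
    obtain ⟨g, rfl⟩ := (Quotient.functor (stableRel K R)).map_surjective b
    exact CategoryTheory.Quotient.sound _ (h _)

lemma StableMod.projective_iff_subsingleton_end (X : fdMod K R) :
    Module.Projective R X.obj ↔ Subsingleton ((⟨X⟩ : StableMod K R) ⟶ ⟨X⟩) := by
  rw [StableMod.subsingleton_hom_iff, projective_iff_factorsThroughProjective_id]
  exact ⟨fun h f => by simpa using h.comp_left f, fun h => h _⟩

end StableCategory

section Syzygies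

variable {K} {R : Type u} [Ring R] [Algebra K R]

lemma CategoryTheory.ProjectiveResolution.subsingleton_extGrp_succ_iff {X : ModuleCat.{u} R}
    (P : ProjectiveResolution X) (n : ℕ) (Y : ModuleCat.{u} R) :
    Subsingleton (ExtGrp K R (n + 1) X Y) ↔
      ∀ f : P.complex.X (n + 1) ⟶ Y, P.complex.d (n + 2) (n + 1) ≫ f = 0 →
        ∃ g : P.complex.X n ⟶ Y, P.complex.d (n + 1) n ≫ g = f := by
  rw [← ModuleCat.isZero_iff_subsingleton, Iso.isZero_iff (P.isoExt (n + 1) Y),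
    ← HomologicalComplex.exactAt_iff_isZero_homology,
    HomologicalComplex.exactAt_iff' _ n (n + 1) (n + 2) (by simp) (by simp),
    ShortComplex.moduleCat_exact_iff]
  exact Iff.rfl

/-- Short exact sequences `0 → obj (n + 1) → cover n → obj n → 0` with projective middle terms;
spliced together they form a projective resolution of `obj 0`. -/
structure SyzygySequence (R : Type u) [Ring R] where
  obj : ℕ → ModuleCat.{u} R
  cover : ℕ → ModuleCat.{u} R
  π : ∀ n, cover n ⟶ obj n
  ι : ∀ n, obj (n + 1) ⟶ cover n
  projective : ∀ n, Module.Projective R (cover n)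
  surjective : ∀ n, Function.Surjective (π n)
  injective : ∀ n, Function.Injective (ι n)
  exact : ∀ n, Function.Exact (ι n) (π n)

namespace SyzygySequence

def ofIsSyzygyOf (obj : ℕ → ModuleCat.{u} R) (h : ∀ n, IsSyzygyOf R (obj (n + 1)) (obj n)) :
    SyzygySequence R where
  obj := obj
  cover n := (h n).choose
  π n := (h n).choose_spec.choose
  ι n := (h n).choose_spec.choose_spec.choose
  projective n := (h n).choose_spec.choose_spec.choose_spec.1
  surjective n := (h n).choose_spec.choose_spec.choose_spec.2.1
  injective n := (h n).choose_spec.choose_spec.choose_spec.2.2.2.1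
  exact n := (h n).choose_spec.choose_spec.choose_spec.2.2.2.2

variable (C : SyzygySequence R)

@[simp]
lemma ι_π (n : ℕ) : C.ι n ≫ C.π n = 0 := by
  ext x
  exact (C.exact n).apply_apply_eq_zero x

@[simp]
lemma ι_π_assoc (n : ℕ) {Z : ModuleCat.{u} R} (f : C.obj n ⟶ Z) : C.ι n ≫ C.π n ≫ f = 0 := by
  rw [← Category.assoc, ι_π, Limits.zero_comp]

instance (n : ℕ) : Epi (C.π n) := (ModuleCat.epi_iff_surjective _).2 (C.surjective n)

lemma shortComplex_exact (n : ℕ) : (ShortComplex.mk (C.ι n) (C.π n) (C.ι_π n)).Exact :=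
  ModuleCat.shortComplex_exact _ (C.exact n)

def d (n : ℕ) : C.cover (n + 1) ⟶ C.cover n := C.π (n + 1) ≫ C.ι n

abbrev complex : ChainComplex (ModuleCat.{u} R) ℕ :=
  ChainComplex.of C.cover C.d fun n => by simp [d]

lemma complex_d (n : ℕ) : C.complex.d (n + 1) n = C.π (n + 1) ≫ C.ι n :=
  ChainComplex.of_d _ _ _

lemma complex_d_apply (n : ℕ) (x : C.cover (n + 1)) :
    C.complex.d (n + 1) n x = C.ι n (C.π (n + 1) x) := by
  rw [complex_d]
  rfl

lemma complex_exactAt_succ (n : ℕ) : C.complex.ExactAt (n + 1) := by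
  rw [HomologicalComplex.exactAt_iff' _ (n + 2) (n + 1) n (by simp) (by simp),
    ShortComplex.moduleCat_exact_iff]
  intro x hx
  replace hx : C.ι n (C.π (n + 1) x) = 0 := (C.complex_d_apply n x).symm.trans hx
  obtain ⟨y, rfl⟩ := ((C.exact (n + 1)) x).1 (C.injective n (by simpa using hx))
  obtain ⟨z, rfl⟩ := C.surjective (n + 2) y
  exact ⟨z, C.complex_d_apply (n + 1) z⟩

def augmentation : C.complex ⟶ (ChainComplex.single₀ (ModuleCat.{u} R)).obj (C.obj 0) :=
  (ChainComplex.toSingle₀Equiv _ _).symm ⟨C.π 0, by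
    rw [complex_d, Category.assoc, ι_π, Limits.comp_zero]⟩

instance : QuasiIso C.augmentation where
  quasiIsoAt n := by
    cases n with
    | zero =>
      rw [ChainComplex.quasiIsoAt₀_iff, ShortComplex.quasiIso_iff_of_zeros' _ rfl rfl rfl]
      refine ⟨?_, (ModuleCat.epi_iff_surjective _).2 (C.surjective 0)⟩
      rw [ShortComplex.moduleCat_exact_iff]
      intro x hx
      obtain ⟨y, rfl⟩ := ((C.exact 0) x).1 hx
      obtain ⟨z, rfl⟩ := C.surjective 1 y
      exact ⟨z, C.complex_d_apply 0 z⟩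
    | succ n =>
      rw [quasiIsoAt_iff_exactAt' _ _ (ChainComplex.exactAt_succ_single_obj _ _)]
      exact C.complex_exactAt_succ n

abbrev projectiveResolution : ProjectiveResolution (C.obj 0) where
  complex := C.complex
  projective n := (IsProjective.iff_projective _).1 (C.projective n)
  π := C.augmentation

lemma subsingleton_extGrp_succ_iff (n : ℕ) (Y : ModuleCat.{u} R) :
    Subsingleton (ExtGrp K R (n + 1) (C.obj 0) Y) ↔
      ∀ g : C.obj (n + 1) ⟶ Y, ∃ h : C.cover n ⟶ Y, C.ι n ≫ h = g := by
  rw [C.projectiveResolution.subsingleton_extGrp_succ_iff, C.complex_d n, C.complex_d (n + 1)]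
  simp only [Category.assoc]
  constructor
  · intro H g
    obtain ⟨h, hh⟩ := H (C.π (n + 1) ≫ g) (by simp)
    exact ⟨h, (cancel_epi (C.π (n + 1))).1 hh⟩
  · intro H f hf
    obtain ⟨g, rfl⟩ := (C.shortComplex_exact (n + 1)).desc' f
      ((cancel_epi (C.π (n + 2))).1 (by simpa using hf))
    obtain ⟨h, rfl⟩ := H g
    exact ⟨h, rfl⟩

variable {C} {n : ℕ} {Y : ModuleCat.{u} R}

lemma factorsThroughProjective_of_subsingleton_extGrp
    (h : Subsingleton (ExtGrp K R (n + 1) (C.obj 0) Y)) (g : C.obj (n + 1) ⟶ Y) :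
    FactorsThroughProjective g := by
  obtain ⟨h, rfl⟩ := (C.subsingleton_extGrp_succ_iff n Y).1 h g
  exact ⟨C.cover n, C.projective n, C.ι n, h, rfl⟩

lemma subsingleton_extGrp_of_factorsThroughProjective [Module.Injective R R] [Module.Finite R Y]
    (h : ∀ g : C.obj (n + 1) ⟶ Y, FactorsThroughProjective g) :
    Subsingleton (ExtGrp K R (n + 1) (C.obj 0) Y) :=
  (C.subsingleton_extGrp_succ_iff n Y).2 fun g => (h g).exists_comp_eq (C.injective n)

end SyzygySequence

end Syzygies

section ProjectiveCover

variable {R : Type u} [Ring R] {M : ModuleCat.{u} R} {V : Type u} [AddCommGroup V] [Module R V]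

lemma isSyzygyOf_ker [Module.Projective R V] {pr : V →ₗ[R] M} (hpr : Function.Surjective pr)
    (hsup : ∀ L : Submodule R V, L ⊔ LinearMap.ker pr = ⊤ → L = ⊤) :
    IsSyzygyOf R (ModuleCat.of R (LinearMap.ker pr)) M := by
  refine ⟨ModuleCat.of R V, ModuleCat.ofHom pr, ModuleCat.ofHom (LinearMap.ker pr).subtype,
    ‹_›, hpr, fun L hL => hsup L (eq_top_iff.2 fun x _ => ?_), Subtype.coe_injective,
    LinearMap.exact_subtype_ker_map pr⟩
  obtain ⟨y, hy, hxy⟩ := hL x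
  exact Submodule.mem_sup.2 ⟨y, hy, x - y, by simpa [sub_eq_zero] using hxy.symm, by abel⟩

lemma Submodule.projective_of_isCompl [Module.Projective R V] {p q : Submodule R V}
    (h : IsCompl p q) : Module.Projective R p :=
  .of_split p.subtype (p.projectionOnto q h) (LinearMap.ext (p.projectionOnto_apply_left h))

lemma exists_projective_ne_top_of_sup_ker_eq_top [IsArtinian R V] [IsNoetherian R V]
    [Module.Projective R V] {pr : V →ₗ[R] M} (hpr : Function.Surjective pr)
    {L : Submodule R V} (hL : L ⊔ LinearMap.ker pr = ⊤) (hLtop : L ≠ ⊤) :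
    ∃ W : Submodule R V, W ≠ ⊤ ∧ Module.Projective R W ∧
      Function.Surjective (pr ∘ₗ W.subtype) := by
  have hsurjL : Function.Surjective (pr ∘ₗ L.subtype) := by
    intro m
    obtain ⟨x, rfl⟩ := hpr m
    obtain ⟨y, hy, z, hz, rfl⟩ := Submodule.mem_sup.1 (hL ▸ Submodule.mem_top (x := x))
    exact ⟨⟨y, hy⟩, by simp [LinearMap.mem_ker.1 hz]⟩
  obtain ⟨s, hs⟩ := Module.projective_lifting_property (pr ∘ₗ L.subtype) pr hsurjL
  set e : Module.End R V := L.subtype ∘ₗ s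
  have hpe : ∀ k x, pr ((e ^ k) x) = pr x := by
    intro k
    induction k with
    | zero => simp
    | succ k ih => intro x; rw [pow_succ, Module.End.mul_apply, ih]; exact LinearMap.congr_fun hs x
  -- Fitting's lemma: for large `k`, `range (e ^ k) ⊆ L` is a direct summand of `V`.
  obtain ⟨k, hk, hcompl⟩ :=
    ((Filter.eventually_ge_atTop 1).and e.eventually_isCompl_ker_pow_range_pow).exists
  refine ⟨LinearMap.range (e ^ k), fun htop => hLtop (eq_top_iff.2 ?_),
    Submodule.projective_of_isCompl hcompl.symm, fun m => ?_⟩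
  · obtain ⟨j, rfl⟩ := Nat.exists_eq_add_of_le' hk
    rw [← htop, pow_succ', Module.End.mul_eq_comp]
    exact (LinearMap.range_comp_le_range _ _).trans
      ((LinearMap.range_comp_le_range _ _).trans L.range_subtype.le)
  · obtain ⟨x, rfl⟩ := hpr m
    exact ⟨⟨(e ^ k) x, LinearMap.mem_range_self _ x⟩, hpe k x⟩

lemma exists_isSyzygyOf_of_surjective [IsArtinianRing R] [Module.Finite R V]
    [Module.Projective R V] {pr : V →ₗ[R] M} (hpr : Function.Surjective pr) :
    ∃ N : ModuleCat.{u} R, Module.Finite R N ∧ IsSyzygyOf R N M := by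
  induction hℓ : Module.length R V using WellFoundedLT.induction generalizing V with
  | _ ℓ ih =>
    by_cases hsup : ∀ L : Submodule R V, L ⊔ LinearMap.ker pr = ⊤ → L = ⊤
    · exact ⟨_, inferInstance, isSyzygyOf_ker hpr hsup⟩
    · push Not at hsup
      obtain ⟨L, hL, hLtop⟩ := hsup
      obtain ⟨W, hW, _, hWsurj⟩ := exists_projective_ne_top_of_sup_ker_eq_top hpr hL hLtop
      exact ih _ (hℓ ▸ Submodule.length_lt hW) hWsurj rfl

lemma exists_isSyzygyOf [IsArtinianRing R] (M : ModuleCat.{u} R) [Module.Finite R M] :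
    ∃ N : ModuleCat.{u} R, Module.Finite R N ∧ IsSyzygyOf R N M := by
  obtain ⟨m, pr, hpr⟩ := Module.Finite.exists_fin' R M
  exact exists_isSyzygyOf_of_surjective hpr

lemma exists_isSyzygyOf_seq [IsArtinianRing R] (M : ModuleCat.{u} R) [Module.Finite R M] :
    ∃ C : ℕ → ModuleCat.{u} R, C 0 = M ∧ (∀ n, Module.Finite R (C n)) ∧
      ∀ n, IsSyzygyOf R (C (n + 1)) (C n) := by
  choose Ω hΩ using fun N : {N : ModuleCat.{u} R // Module.Finite R N} =>
    have := N.2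
    exists_isSyzygyOf N.1
  let C : ℕ → {N : ModuleCat.{u} R // Module.Finite R N} :=
    fun n => n.rec ⟨M, ‹_›⟩ fun _ N => ⟨Ω N, (hΩ N).1⟩
  exact ⟨fun n => (C n).1, rfl, fun n => (C n).2, fun n => (hΩ (C n)).2⟩

end ProjectiveCover

/-- A triangle equivalence is encoded by `hψΩ`: an equivalence of stable categories that
commutes with the syzygy functor `Ω`. -/
theorem tachikawa_stable_equivalence
    (A B : Type u) [Ring A] [Algebra K A]
    [Ring B] [Algebra K B] [FiniteDimensional K B]
    (hselfA : Injective (ModuleCat.of A A))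
    (ψ : StableMod K B ≌ StableMod K A)
    (hψΩ : ∀ (M N : fdMod K B), IsSyzygyOf B N.obj M.obj →
      IsSyzygyOf A ((ψ.functor.obj ⟨N⟩).as.obj) ((ψ.functor.obj ⟨M⟩).as.obj))
    (hA : SatisfiesTachikawa K A) :
    SatisfiesTachikawa K B := by
  intro M hM hext
  have := IsArtinianRing.of_finite K B
  have := (Module.injective_iff_injective_object A A).2 hselfA
  obtain ⟨C, rfl, hCfin, hC⟩ := exists_isSyzygyOf_seq M
  let X : ℕ → fdMod K B := fun n => ⟨C n, hCfin n⟩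
  let D := SyzygySequence.ofIsSyzygyOf (fun n => (ψ.functor.obj ⟨X n⟩).as.obj)
    fun n => hψΩ (X n) (X (n + 1)) (hC n)
  have hD0 : Module.Finite A (D.obj 0) := (ψ.functor.obj ⟨X 0⟩).as.property
  have hDext : ∀ i, 0 < i → Subsingleton (ExtGrp K A i (D.obj 0) (D.obj 0)) := by
    rintro (_ | n) hn
    · exact absurd hn (lt_irrefl 0)
    have hstable : Subsingleton ((⟨X (n + 1)⟩ : StableMod K B) ⟶ ⟨X 0⟩) :=
      StableMod.subsingleton_hom_iff.2
        ((SyzygySequence.ofIsSyzygyOf C hC).factorsThroughProjective_of_subsingleton_extGrp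
          (hext (n + 1) n.succ_pos))
    exact D.subsingleton_extGrp_of_factorsThroughProjective <| StableMod.subsingleton_hom_iff.1 <|
      ψ.fullyFaithfulFunctor.homEquiv.subsingleton_congr.1 hstable
  exact (StableMod.projective_iff_subsingleton_end (X 0)).2
    (ψ.fullyFaithfulFunctor.homEquiv.subsingleton_congr.2
      ((StableMod.projective_iff_subsingleton_end _).1 (hA _ hD0 hDext)))
end
end

section
/- Let A be a finite dimensional self-injective algebra satisfying the Tachikawa conjecture and F : mod(B) → mod(A) a homological embedding. Then F(B) is a projective A-module. -/
open CategoryTheory Limits Opposite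

universe u

noncomputable section

variable (K : Type u) [Field K]

/-!
`B` is projective over itself, so it has no self-extensions in positive degrees. A homological
embedding transports this to `F(B)`, which therefore is projective by the Tachikawa property
of `A`.
-/

theorem subsingleton_extGrp_of_projective {A : Type u} [Ring A] [Algebra K A]
    (X Y : ModuleCat.{u} A) [Projective X] {i : ℕ} (hi : 0 < i) :
    Subsingleton (ExtGrp K A i X Y) := by
  obtain ⟨j, rfl⟩ := Nat.exists_eq_succ_of_ne_zero hi.ne'
  exact ModuleCat.subsingleton_of_isZero (isZero_Ext_succ_of_projective X Y j)

/-- Let `A` be a finite dimensional self-injective algebra satisfying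
the Tachikawa conjecture and `F : mod B → mod A` a homological embedding (fully
faithful, exact, inducing isomorphisms on all `Extⁱ`, `i > 0`).  Then `F(B)` is a
projective `A`-module. -/
theorem homological_embedding_image_of_ring_projective
    (A B : Type u) [Ring A] [Algebra K A]
    [Ring B] [Algebra K B]
    (htach : SatisfiesTachikawa K A)
    (F : fdMod K B ⥤ fdMod K A)
    (hext : ∀ i : ℕ, 0 < i → ∀ X Y : fdMod K B,
      Nonempty (ExtGrp K B i X.obj Y.obj ≅ ExtGrp K A i (F.obj X).obj (F.obj Y).obj)) :
    Module.Projective A (F.obj ⟨ModuleCat.of B B, by exact Module.Finite.self B⟩).obj := by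
  set X : fdMod K B := ⟨ModuleCat.of B B, by exact Module.Finite.self B⟩
  have : Projective X.obj := (IsProjective.iff_projective B).mp inferInstance
  refine htach _ (F.obj X).property fun i hi => ?_
  obtain ⟨e⟩ := hext i hi X X
  have := subsingleton_extGrp_of_projective K X.obj X.obj hi
  exact e.toLinearEquiv.toEquiv.symm.subsingleton
end
end

section
/- Let A be a finite dimensional self-injective algebra and F : mod(B) → mod(A) a fully faithful exact functor such that F(B) is a projective A-module. Then B is self-injective. -/
open CategoryTheory Limits Opposite

universe u

noncomputable section

variable (K : Type u) [Field K]

/-! Over the self-injective algebra `A` the finitely generated projective module `F(B)` is a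
direct summand of some `Aⁿ`, hence injective. Maps into `B` can therefore be extended along
monomorphisms of `mod B`: extend their images under `F` into `F(B)` and pull back along the fully
faithful `F`. Since `B` is Noetherian, its ideals lie in `mod B`, so this is Baer's criterion. -/

section Injective

universe v w

variable {R : Type u} [Ring R] {M : Type v} {Q : Type w} [AddCommGroup M] [Module R M]
  [AddCommGroup Q] [Module R Q]

lemma Module.Injective.of_retract [Small.{w} R] [Module.Injective R Q] (s : M →ₗ[R] Q)
    (p : Q →ₗ[R] M) (hps : p ∘ₗ s = LinearMap.id) : Module.Injective R M where
  out X Y _ _ _ _ f hf g := by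
    obtain ⟨h, hh⟩ := Module.Injective.extension_property R Q X Y f hf (s ∘ₗ g)
    refine ⟨p ∘ₗ h, fun x => ?_⟩
    rw [LinearMap.comp_apply, ← LinearMap.comp_apply h, hh, ← LinearMap.comp_apply p,
      ← LinearMap.comp_assoc, hps, LinearMap.id_comp]

lemma Module.Injective.of_projective_of_finite [Module.Injective R R]
    [Module.Projective R M] [Module.Finite R M] : Module.Injective R M := by
  obtain ⟨n, f, hf⟩ := Module.Finite.exists_fin' R M
  obtain ⟨s, hs⟩ := f.exists_rightInverse_of_surjective (LinearMap.range_eq_top.mpr hf)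
  exact .of_retract s f hs

end Injective

section FdMod

variable {K : Type u} [Field K] {A B : Type u} [Ring A] [Algebra K A] [Ring B] [Algebra K B]

lemma IsExactFunctor.map_injective {F : fdMod K B ⥤ fdMod K A} (hF : IsExactFunctor F)
    {X Y : fdMod K B} (f : X ⟶ Y) (hf : Function.Injective (fdHom f)) :
    Function.Injective (fdHom (F.map f)) := by
  have : Module.Finite B Y.obj := Y.property
  let Z : fdMod K B :=
    ⟨ModuleCat.of B (Y.obj ⧸ LinearMap.range (fdHom f).hom), Module.Finite.quotient B _⟩
  let q : Y ⟶ Z := ObjectProperty.homMk (ModuleCat.ofHom (LinearMap.range (fdHom f).hom).mkQ)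
  exact (hF X Y Z f q hf (LinearMap.exact_map_mkQ_range _) (Submodule.mkQ_surjective _)).1

lemma IsExactFunctor.exists_comp_eq_of_injective_obj {F : fdMod K B ⥤ fdMod K A} [F.Full]
    [F.Faithful] (hF : IsExactFunctor F) {Y : fdMod K B} [Module.Injective A (F.obj Y).obj]
    {X X' : fdMod K B} (i : X ⟶ X') (hi : Function.Injective (fdHom i)) (g : X ⟶ Y) :
    ∃ h : X' ⟶ Y, i ≫ h = g := by
  obtain ⟨h, hh⟩ := Module.Injective.extension_property A _ _ _ (fdHom (F.map i)).hom
    (hF.map_injective i hi) (fdHom (F.map g)).hom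
  refine ⟨F.preimage (ObjectProperty.homMk (ModuleCat.ofHom h)), F.map_injective ?_⟩
  rw [F.map_comp, F.map_preimage]
  ext x
  exact LinearMap.congr_fun hh x

lemma Module.Baer.of_exists_comp_eq [IsNoetherianRing B] (Y : fdMod K B)
    (hY : ∀ {X X' : fdMod K B} (i : X ⟶ X'), Function.Injective (fdHom i) →
      ∀ g : X ⟶ Y, ∃ h : X' ⟶ Y, i ≫ h = g) :
    Module.Baer B Y.obj := by
  intro I g
  let X : fdMod K B := ⟨ModuleCat.of B I, inferInstance⟩
  let X' : fdMod K B := ⟨ModuleCat.of B B, Module.Finite.self B⟩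
  obtain ⟨h, hh⟩ := hY (X := X) (X' := X') (ObjectProperty.homMk (ModuleCat.ofHom I.subtype))
    Subtype.val_injective (ObjectProperty.homMk (ModuleCat.ofHom g))
  exact ⟨(fdHom h).hom, fun x hx => congr(fdHom $hh ⟨x, hx⟩)⟩

end FdMod

/-- Let `A` be a finite dimensional self-injective algebra and
`F : mod B → mod A` a fully faithful exact functor such that `F(B)` is a projective
`A`-module.  Then `B` is self-injective. -/
theorem selfinjective_of_image_of_ring_projective
    (A B : Type u) [Ring A] [Algebra K A]
    [Ring B] [Algebra K B] [FiniteDimensional K B]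
    (hself : Injective (ModuleCat.of A A))
    (F : fdMod K B ⥤ fdMod K A) (hfull : F.Full) (hfaithful : F.Faithful)
    (hexact : IsExactFunctor F)
    (hproj : Module.Projective A (F.obj ⟨ModuleCat.of B B, by exact Module.Finite.self B⟩).obj) :
    Injective (ModuleCat.of B B) := by
  let BB : fdMod K B := ⟨ModuleCat.of B B, Module.Finite.self B⟩
  have : Module.Injective A A := Module.injective_module_of_injective_object A A
  have : Module.Finite A (F.obj BB).obj := (F.obj BB).property
  have : Module.Injective A (F.obj BB).obj := .of_projective_of_finite
  have : IsNoetherianRing B := isNoetherian_of_tower K inferInstance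
  have hbaer : Module.Baer B B :=
    .of_exists_comp_eq BB fun i hi g => hexact.exists_comp_eq_of_injective_obj i hi g
  exact Module.injective_object_of_injective_module B B (inj := hbaer.injective)
end
end

section
/- Let A be a finite dimensional self-injective algebra satisfying the Tachikawa conjecture and F : mod(B) → mod(A) a homological embedding. If B satisfies Ext_B^i(X,X)=0 for all i>0 for some module X, then X is projective; that is, B also satisfies the Tachikawa conjecture. -/
open CategoryTheory Limits Opposite

universe u

noncomputable section

variable (K : Type u) [Field K]

/-!
`F X` has no self-extensions, so it is projective by the Tachikawa property of `A`; hence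
`Ext¹_B(X, N) ≅ Ext¹_A(F X, F N) = 0` for every finite dimensional `N`. Taking `N` to be the
kernel of a presentation `Bⁿ → X` (finite dimensional since `B` is noetherian), the presentation
splits and `X` is a direct summand of `Bⁿ`.
-/

namespace CategoryTheory

variable {R : Type*} [Ring R] {C : Type*} [Category C] [Abelian C] [Linear R C]
  [EnoughProjectives C]

theorem ProjectiveResolution.exists_d_comp_eq_of_isZero_Ext {Z : C} (P : ProjectiveResolution Z)
    {Y : C} {n : ℕ}
    (hZ : IsZero (((Ext R C (n + 1)).obj (op Z)).obj Y))
    (c : P.complex.X (n + 1) ⟶ Y) (hc : P.complex.d (n + 2) (n + 1) ≫ c = 0) :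
    ∃ s : P.complex.X n ⟶ Y, P.complex.d (n + 1) n ≫ s = c := by
  have hexact := (HomologicalComplex.exactAt_iff_isZero_homology _ (n + 1)).2
    (hZ.of_iso (P.isoExt (R := R) (n + 1) Y).symm)
  rw [HomologicalComplex.exactAt_iff' _ n (n + 1) (n + 2) (by simp) (by simp),
    ShortComplex.moduleCat_exact_iff] at hexact
  exact hexact c hc

theorem ShortComplex.ShortExact.isSplitEpi_g_of_isZero_Ext_one {S : ShortComplex C}
    (hS : S.ShortExact)
    (hExt : IsZero (((Ext R C 1).obj (Opposite.op S.X₃)).obj S.X₁)) : IsSplitEpi S.g := by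
  have : Mono S.f := hS.mono_f
  have : Epi S.g := hS.epi_g
  let P := ProjectiveResolution.of S.X₃
  let π : P.complex.X 0 ⟶ S.X₃ := P.π.f 0
  have hπ : (ShortComplex.mk (P.complex.d 1 0) π P.complex_d_comp_π_f_zero).Exact := P.exact₀
  have : Epi π := inferInstanceAs (Epi (P.π.f 0))
  obtain ⟨g, hg⟩ := Projective.factors π S.g
  let c : P.complex.X 1 ⟶ S.X₁ := hS.exact.lift (P.complex.d 1 0 ≫ g) (by
    rw [Category.assoc, hg]; exact P.complex_d_comp_π_f_zero)
  have hc : c ≫ S.f = P.complex.d 1 0 ≫ g := hS.exact.lift_f _ _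
  have hcocycle : P.complex.d 2 1 ≫ c = 0 := by
    simp [← cancel_mono S.f, hc]
  -- `c` represents the class of `S` in `Ext¹`; writing it as `d ≫ s`, the lift `g` corrected by
  -- `s ≫ S.f` kills the image of `d`, so it factors through `π` as a section of `S.g`.
  obtain ⟨s, hs⟩ := P.exists_d_comp_eq_of_isZero_Ext (n := 0) hExt c hcocycle
  let σ : S.X₃ ⟶ S.X₂ := hπ.desc (g - s ≫ S.f) (by simp [reassoc_of% hs, hc])
  have hσ : π ≫ σ = g - s ≫ S.f := hπ.g_desc _ _
  refine ⟨⟨σ, (cancel_epi π).1 ?_⟩⟩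
  simp [reassoc_of% hσ, hg]

end CategoryTheory

theorem Module.Projective.of_subsingleton_Ext_one (k : Type*) [Field k] {B : Type u} [Ring B]
    [Algebra k B] [IsNoetherianRing B] (M : ModuleCat.{u} B) [Module.Finite B M]
    (hExt : ∀ N : ModuleCat.{u} B, Module.Finite B N →
      Subsingleton (((Ext k (ModuleCat.{u} B) 1).obj (op M)).obj N)) :
    Module.Projective B M := by
  obtain ⟨n, f, hf⟩ := Module.Finite.exists_fin' B M
  have hS := LinearMap.shortExact_shortComplexKer hf
  have := hS.isSplitEpi_g_of_isZero_Ext_one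
    (@ModuleCat.isZero_of_subsingleton _ _ _ (hExt _ inferInstance))
  exact Module.Projective.of_split (section_ f.shortComplexKer.g).hom f
    (ModuleCat.hom_ext_iff.1 (IsSplitEpi.id f.shortComplexKer.g))

theorem tachikawa_transfers_along_homological_embedding
    (A B : Type u) [Ring A] [Algebra K A]
    [Ring B] [Algebra K B] [FiniteDimensional K B]
    (htach : SatisfiesTachikawa K A)
    (F : fdMod K B ⥤ fdMod K A)
    (hext : ∀ i : ℕ, 0 < i → ∀ X Y : fdMod K B,
      Nonempty (ExtGrp K B i X.obj Y.obj ≅ ExtGrp K A i (F.obj X).obj (F.obj Y).obj)) :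
    SatisfiesTachikawa K B := by
  intro M hM hMM
  let X : fdMod K B := ⟨M, hM⟩
  have hFX : Module.Projective A (F.obj X).obj := htach _ (F.obj X).property fun i hi =>
    (hext i hi X X).some.toLinearEquiv.toEquiv.subsingleton_congr.mp (hMM i hi)
  have : Projective (F.obj X).obj := (IsProjective.iff_projective _).mp hFX
  have : IsNoetherianRing B := isNoetherian_of_tower K inferInstance
  refine Module.Projective.of_subsingleton_Ext_one K M fun N hN => ?_
  exact (hext 1 one_pos X ⟨N, hN⟩).some.toLinearEquiv.toEquiv.subsingleton_congr.mpr
    (ModuleCat.subsingleton_of_isZero (isZero_Ext_succ_of_projective _ _ 0))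
end
end
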